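/- arXiv:2305.15408 — 2 statements merged into one kernel-verified Lean document; each statement's English description precedes it below -/
import Mathlib

section
/- Let σ : ℝ → ℝ be the GeLU function σ(x) = x·Φ(x), where Φ is the standard normal cumulative distribution function. For every M > 0, every λ > 2M, and all a, b ∈ [-M, M], one has |σ((a+b)/λ) + σ((-a-b)/λ) − σ((a−b)/λ) − σ((−a+b)/λ) − 8ab/(√(2π)·λ²)| ≤ 60·M³/λ³. -/
/-- The standard normal cumulative distribution function
`Φ(x) = (1/√(2π)) ∫_{-∞}^x e^{-t²/2} dt`. -/
noncomputable def stdNormalCDF (x : ℝ) : ℝ :=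
  (1 / Real.sqrt (2 * Real.pi)) * ∫ t in Set.Iic x, Real.exp (-(t ^ 2) / 2)

/-- The GeLU activation function `σ(x) = x·Φ(x)`. -/
noncomputable def gelu (x : ℝ) : ℝ := x * stdNormalCDF x

/-!
The even part `σ(x) + σ(-x) = x (Φ(x) - Φ(-x))` is `x/√(2π)` times the Gaussian integral over
`[-x, x]`, which is `2x + O(|x|³)` since `0 ≤ 1 - e^{-t²/2} ≤ t²/2`. Hence
`σ(x) + σ(-x) = 2x²/√(2π) + O(x⁴)`. With `u = (a+b)/λ` and `v = (a-b)/λ` the combination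
is the difference of the even parts at `u` and `v`, and `2(u² - v²) = 8ab/λ²`, so the error
is `O(u⁴ + v⁴) = O(M⁴/λ⁴)`, which is `O(M³/λ³)` because `2M < λ`.
-/

open Real MeasureTheory

lemma integrable_exp_neg_sq_div_two : Integrable fun t : ℝ => exp (-(t ^ 2) / 2) := by
  convert integrable_exp_neg_mul_sq (by norm_num : (0 : ℝ) < 1 / 2) using 3
  ring

lemma gelu_add_gelu_neg (x : ℝ) :
    gelu x + gelu (-x) = x / √(2 * π) * ∫ t in -x..x, exp (-(t ^ 2) / 2) := by
  rw [← intervalIntegral.integral_Iic_sub_Iic integrable_exp_neg_sq_div_two.integrableOn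
    integrable_exp_neg_sq_div_two.integrableOn]
  simp only [gelu, stdNormalCDF]
  ring

lemma abs_exp_neg_sq_div_two_sub_one_le (t : ℝ) : |exp (-(t ^ 2) / 2) - 1| ≤ t ^ 2 / 2 := by
  have h_le_one : exp (-(t ^ 2) / 2) ≤ 1 := exp_le_one_iff.mpr (by nlinarith [sq_nonneg t])
  rw [abs_sub_comm, abs_of_nonneg (by linarith)]
  linarith [add_one_le_exp (-(t ^ 2) / 2)]

lemma abs_integral_exp_neg_sq_div_two_sub_le (x : ℝ) :
    |(∫ t in -x..x, exp (-(t ^ 2) / 2)) - 2 * x| ≤ |x| ^ 3 := by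
  have h_const : (∫ _ in -x..x, (1 : ℝ)) = 2 * x := by
    simp only [intervalIntegral.integral_const, sub_neg_eq_add, smul_eq_mul, mul_one]
    ring
  rw [← h_const, ← intervalIntegral.integral_sub
    integrable_exp_neg_sq_div_two.intervalIntegrable intervalIntegrable_const, ← norm_eq_abs]
  calc ‖∫ t in -x..x, (exp (-(t ^ 2) / 2) - 1)‖ ≤ x ^ 2 / 2 * |x - -x| := by
        refine intervalIntegral.norm_integral_le_of_norm_le_const fun t ht => ?_
        have ht_sq : t ^ 2 ≤ x ^ 2 := by
          rcases Set.mem_uIoc.mp ht with h | h <;> nlinarith [h.1, h.2]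
        exact (abs_exp_neg_sq_div_two_sub_one_le t).trans (by linarith)
    _ = |x| ^ 3 := by
        rw [show x - -x = 2 * x by ring, abs_mul, abs_two, ← sq_abs x]
        ring

lemma abs_gelu_add_gelu_neg_sub_le (x : ℝ) :
    |gelu x + gelu (-x) - 2 * x ^ 2 / √(2 * π)| ≤ x ^ 4 / √(2 * π) := by
  have hc : 0 < √(2 * π) := by positivity
  have h_eq : gelu x + gelu (-x) - 2 * x ^ 2 / √(2 * π)
      = x / √(2 * π) * ((∫ t in -x..x, exp (-(t ^ 2) / 2)) - 2 * x) := by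
    rw [gelu_add_gelu_neg]
    ring
  rw [h_eq, abs_mul, abs_div, abs_of_pos hc]
  calc |x| / √(2 * π) * |(∫ t in -x..x, exp (-(t ^ 2) / 2)) - 2 * x|
      ≤ |x| / √(2 * π) * |x| ^ 3 := by
        gcongr
        exact abs_integral_exp_neg_sq_div_two_sub_le x
    _ = x ^ 4 / √(2 * π) := by
        rw [← Even.pow_abs (by decide : Even 4) x]
        ring

lemma div_pow_four_le_of_abs_le {w r lam : ℝ} (hw : |w| ≤ r) (hr : r ≤ lam) :
    (w / lam) ^ 4 ≤ r ^ 3 / lam ^ 3 := by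
  have hlam : 0 ≤ lam := (abs_nonneg w).trans (hw.trans hr)
  have h_le_one : |w| / lam ≤ 1 := div_le_one_of_le₀ (hw.trans hr) hlam
  calc (w / lam) ^ 4 = (|w| / lam) ^ 4 := by rw [div_pow, div_pow, Even.pow_abs (by decide)]
    _ ≤ (|w| / lam) ^ 3 := pow_le_pow_of_le_one (by positivity) h_le_one (by norm_num)
    _ ≤ (r / lam) ^ 3 := by gcongr
    _ = r ^ 3 / lam ^ 3 := div_pow r lam 3

theorem gelu_combination_approx_general (M lam : ℝ) (hlam : 2 * M < lam)
    (a b : ℝ) (ha : a ∈ Set.Icc (-M) M) (hb : b ∈ Set.Icc (-M) M) :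
    |gelu ((a + b) / lam) + gelu ((-a - b) / lam) - gelu ((a - b) / lam)
        - gelu ((-a + b) / lam) - 8 * a * b / (Real.sqrt (2 * Real.pi) * lam ^ 2)|
      ≤ 60 * M ^ 3 / lam ^ 3 := by
  set c := √(2 * π)
  set u := (a + b) / lam
  set v := (a - b) / lam
  have hc : 1 ≤ c := one_le_sqrt.mpr (by linarith [pi_gt_three])
  have h_even_parts : gelu u + gelu ((-a - b) / lam) - gelu v - gelu ((-a + b) / lam)
        - 8 * a * b / (c * lam ^ 2)
      = (gelu u + gelu (-u) - 2 * u ^ 2 / c) - (gelu v + gelu (-v) - 2 * v ^ 2 / c) := by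
    rw [show (-a - b) / lam = -u by ring, show (-a + b) / lam = -v by ring]
    ring
  have hu : |a + b| ≤ 2 * M := abs_le.mpr ⟨by linarith [ha.1, hb.1], by linarith [ha.2, hb.2]⟩
  have hv : |a - b| ≤ 2 * M := abs_le.mpr ⟨by linarith [ha.1, hb.2], by linarith [ha.2, hb.1]⟩
  have hM : 0 ≤ M := by linarith [ha.1, ha.2]
  have hlam0 : 0 ≤ lam := by linarith
  calc _ = |(gelu u + gelu (-u) - 2 * u ^ 2 / c) - (gelu v + gelu (-v) - 2 * v ^ 2 / c)| := by
        rw [h_even_parts]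
    _ ≤ u ^ 4 / c + v ^ 4 / c :=
        (abs_sub _ _).trans (add_le_add (abs_gelu_add_gelu_neg_sub_le u)
          (abs_gelu_add_gelu_neg_sub_le v))
    _ ≤ u ^ 4 + v ^ 4 :=
        add_le_add (div_le_self (by positivity) hc) (div_le_self (by positivity) hc)
    _ ≤ (2 * M) ^ 3 / lam ^ 3 + (2 * M) ^ 3 / lam ^ 3 :=
        add_le_add (div_pow_four_le_of_abs_le hu hlam.le) (div_pow_four_le_of_abs_le hv hlam.le)
    _ ≤ 60 * M ^ 3 / lam ^ 3 := by
        rw [← add_div]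
        exact div_le_div_of_nonneg_right (by nlinarith [pow_nonneg hM 3]) (pow_nonneg hlam0 3)

/-- For `M > 0`, `λ > 2M` and `a, b ∈ [-M, M]`, the symmetrized combination of GeLU
values approximates `8ab/(√(2π)·λ²)` with error at most `60·M³/λ³`. -/
theorem gelu_combination_approx (M lam : ℝ) (hM : 0 < M) (hlam : 2 * M < lam)
    (a b : ℝ) (ha : a ∈ Set.Icc (-M) M) (hb : b ∈ Set.Icc (-M) M) :
    |gelu ((a + b) / lam) + gelu ((-a - b) / lam) - gelu ((a - b) / lam)
        - gelu ((-a + b) / lam) - 8 * a * b / (Real.sqrt (2 * Real.pi) * lam ^ 2)|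
      ≤ 60 * M ^ 3 / lam ^ 3 :=
  gelu_combination_approx_general M lam hlam a b ha hb
end

section
/- Let GeLU(x) = x·Φ(x) with Φ the standard normal cumulative distribution function, and let ReLU(x) = max(x, 0). For every δ > 0, taking λ = 1/δ, one has |(1/λ)·GeLU(λ·y) − ReLU(y)| ≤ δ for all y ∈ ℝ. In particular, for every δ > 0 there exists λ > 0 such that the function y ↦ (1/λ)·GeLU(λ·y) is uniformly within δ of ReLU on all of ℝ. -/
/-- The ReLU activation function `ReLU(x) = max(x, 0)`. -/
def relu (x : ℝ) : ℝ := max x 0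

open Real MeasureTheory Set

private lemma gauss_integrable : Integrable (fun t : ℝ => Real.exp (-(t ^ 2) / 2)) := by
  have h := integrable_exp_neg_mul_sq (b := (1:ℝ)/2) (by norm_num)
  refine h.congr (Filter.Eventually.of_forall fun t => ?_)
  ring_nf

private lemma gauss_total : (∫ t : ℝ, Real.exp (-(t ^ 2) / 2)) = Real.sqrt (2 * Real.pi) := by
  have h := integral_gaussian (1/2 : ℝ)
  rw [show Real.pi / (1/2 : ℝ) = 2 * Real.pi by ring] at h
  rw [← h]
  congr 1 with t
  ring_nf

private lemma sqrt_two_pi_pos : 0 < Real.sqrt (2 * Real.pi) :=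
  Real.sqrt_pos.mpr (by positivity)

private lemma key (a : ℝ) (ha : 0 < a) :
    a * ((1 / Real.sqrt (2 * Real.pi)) * ∫ t in Ioi a, Real.exp (-(t ^ 2) / 2)) ≤ 1 := by
  have h1 : (∫ t in Ioi a, Real.exp (-(t ^ 2) / 2)) ≤ ∫ t in Ioi a, Real.exp (-(a/2) * t) := by
    refine setIntegral_mono_on (gauss_integrable.integrableOn)
      (exp_neg_integrableOn_Ioi a (by positivity)) measurableSet_Ioi fun t ht => ?_
    have : a ≤ t := (mem_Ioi.mp ht).le
    exact Real.exp_le_exp.mpr (by nlinarith)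
  have h2 : (∫ t in Ioi a, Real.exp (-(a/2) * t)) = (a/2)⁻¹ * Real.exp (-((a/2) * a)) := by
    have := integral_comp_mul_left_Ioi (fun u : ℝ => Real.exp (-u)) a (b := a/2) (by positivity)
    simpa [smul_eq_mul, integral_exp_neg_Ioi, integral_exp_Iic] using this
  have h3 : (∫ t in Ioi a, Real.exp (-(t ^ 2) / 2)) ≤ 2 / a := by
    refine h1.trans ?_
    rw [h2]
    have : Real.exp (-((a/2) * a)) ≤ 1 := Real.exp_le_one_iff.mpr (by nlinarith)
    calc (a/2)⁻¹ * Real.exp (-((a/2)*a)) ≤ (a/2)⁻¹ * 1 := by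
          apply mul_le_mul_of_nonneg_left this (by positivity)
      _ = 2 / a := by field_simp
  have hs : (2 : ℝ) ≤ Real.sqrt (2 * Real.pi) := by
    nlinarith [Real.sq_sqrt (show (0:ℝ) ≤ 2 * Real.pi by positivity),
      Real.sqrt_nonneg (2 * Real.pi), Real.pi_gt_three]
  calc a * ((1 / Real.sqrt (2 * Real.pi)) * ∫ t in Ioi a, Real.exp (-(t ^ 2) / 2))
      ≤ a * ((1 / Real.sqrt (2 * Real.pi)) * (2 / a)) := by
        apply mul_le_mul_of_nonneg_left _ ha.le
        exact mul_le_mul_of_nonneg_left h3 (by positivity)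
    _ = 2 / Real.sqrt (2 * Real.pi) := by field_simp
    _ ≤ 1 := by rw [div_le_one sqrt_two_pi_pos]; exact hs

private lemma cdf_neg (x : ℝ) :
    stdNormalCDF x = (1 / Real.sqrt (2 * Real.pi)) * ∫ t in Ioi (-x), Real.exp (-(t ^ 2) / 2) := by
  unfold stdNormalCDF
  congr 1
  have : (∫ t in Iic x, Real.exp (-(t ^ 2) / 2))
      = ∫ t in Iic x, (fun s : ℝ => Real.exp (-(s ^ 2) / 2)) (-t) := by
    apply setIntegral_congr_fun measurableSet_Iic
    intro t _; simp [neg_pow]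
  rw [this]
  exact integral_comp_neg_Iic x (fun s : ℝ => Real.exp (-(s ^ 2) / 2))

private lemma one_sub_cdf (x : ℝ) :
    1 - stdNormalCDF x = (1 / Real.sqrt (2 * Real.pi)) * ∫ t in Ioi x, Real.exp (-(t ^ 2) / 2) := by
  have hsplit := intervalIntegral.integral_Iic_add_Ioi (b := x) (μ := volume)
    gauss_integrable.integrableOn gauss_integrable.integrableOn
  rw [gauss_total] at hsplit
  unfold stdNormalCDF
  have hne := sqrt_two_pi_pos.ne'
  have hB : (∫ t in Ioi x, Real.exp (-(t ^ 2) / 2))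
      = Real.sqrt (2 * Real.pi) - ∫ t in Iic x, Real.exp (-(t ^ 2) / 2) := by
    linarith [hsplit]
  rw [hB, mul_sub, one_div, inv_mul_cancel₀ hne]

private lemma dist_le_one (x : ℝ) : |gelu x - relu x| ≤ 1 := by
  rcases le_or_gt x 0 with hx | hx
  · have hrelu : relu x = 0 := max_eq_right hx
    rw [hrelu, sub_zero]
    rcases eq_or_lt_of_le hx with rfl | hx'
    · simp [gelu, abs_mul]
    · have hcdf := cdf_neg x
      have hnn : 0 ≤ stdNormalCDF x := by
        rw [hcdf]
        have : 0 ≤ ∫ t in Ioi (-x), Real.exp (-(t ^ 2) / 2) :=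
          setIntegral_nonneg measurableSet_Ioi fun t _ => (Real.exp_pos _).le
        positivity
      have := key (-x) (by linarith)
      rw [← cdf_neg x] at this
      rw [gelu, abs_mul, abs_of_nonpos hx, abs_of_nonneg hnn]
      linarith [this]
  · have hrelu : relu x = x := max_eq_left hx.le
    rw [hrelu, gelu]
    have h1 : x * stdNormalCDF x - x = -(x * (1 - stdNormalCDF x)) := by ring
    rw [h1, abs_neg]
    have hnn : 0 ≤ 1 - stdNormalCDF x := by
      rw [one_sub_cdf]
      have : 0 ≤ ∫ t in Ioi x, Real.exp (-(t ^ 2) / 2) :=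
        setIntegral_nonneg measurableSet_Ioi fun t _ => (Real.exp_pos _).le
      positivity
    have := key x hx
    rw [← one_sub_cdf x] at this
    rw [abs_mul, abs_of_pos hx, abs_of_nonneg hnn]
    linarith [this]

private lemma main_bound {δ : ℝ} (hδ : 0 < δ) (y : ℝ) :
    |(1 / (1 / δ)) * gelu ((1 / δ) * y) - relu y| ≤ δ := by
  have hd : (1 : ℝ) / (1 / δ) = δ := by field_simp
  rw [hd]
  have hrelu : relu y = δ * relu ((1/δ) * y) := by
    unfold relu
    rw [mul_max_of_nonneg _ _ hδ.le, mul_zero]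
    congr 1
    field_simp
  rw [hrelu, ← mul_sub, abs_mul, abs_of_pos hδ]
  calc δ * |gelu ((1/δ) * y) - relu ((1/δ) * y)| ≤ δ * 1 :=
        mul_le_mul_of_nonneg_left (dist_le_one _) hδ.le
    _ = δ := mul_one δ

/-- For every `δ > 0`, taking `λ = 1/δ`, the rescaled GeLU `y ↦ (1/λ)·GeLU(λ·y)` is
uniformly within `δ` of ReLU on all of `ℝ`; in particular, for every `δ > 0` there
exists `λ > 0` with this uniform approximation property. -/
theorem rescaled_gelu_approx_relu :
    (∀ δ : ℝ, 0 < δ →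
      ∀ y : ℝ, |(1 / (1 / δ)) * gelu ((1 / δ) * y) - relu y| ≤ δ) ∧
    (∀ δ : ℝ, 0 < δ → ∃ lam > (0 : ℝ),
      ∀ y : ℝ, |(1 / lam) * gelu (lam * y) - relu y| ≤ δ) := by
  constructor
  · exact fun δ hδ y => main_bound hδ y
  · intro δ hδ
    exact ⟨1/δ, by positivity, fun y => main_bound hδ y⟩
end
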